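/- (Theorem 10, stability for UMAP clusters.) Let X ⊆ Y be finite sets with compatible neighbourhood systems: N_x ⊆ X \ {x} with weights d_x(x,z) ∈ (0,∞), N'_y ⊆ Y \ {y} with weights d'_y(y,z) ∈ (0,∞), N_x ⊆ N'_x and d'_x(x,z) ≤ d_x(x,z) for all x ∈ X, z ∈ N_x. Let D and D' be the UMAP ep-metrics on X and Y, let E be a global connected component of (X,D) and F a global connected component of (Y,D') with E ⊆ F. Let m ≥ 1 satisfy D(u,v) ≤ m · D'(u,v) for all u, v ∈ E, and let r > 0 be such that for every y ∈ F there is an x ∈ E with D'(y,x) < r. For s ∈ [0,∞), let ~_{E,s} be the equivalence relation on E generated by {(u,v) ∈ E × E : D_x(u,v) ≤ s for some x ∈ X}, and let ~_{F,s} be the equivalence relation on F generated by {(u,v) ∈ F × F : D'_y(u,v) ≤ s for some y ∈ Y}. Then there exists θ : F → E with θ(x) = x for all x ∈ E such that for every s ∈ [0,∞): (i) if u, v ∈ E and u ~_{E,s} v, then u ~_{F,s} v; (ii) if u, v ∈ F and u ~_{F,s} v, then θ(u) ~_{E, m(s+2r)} θ(v); and (iii) u ~_{F, m(s+2r)} θ(u)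 for every u ∈ F. Hence the interleaving diagram π₀V(X,N)(E)_s → π₀V(Y,N')(F)_s → π₀V(X,N)(E)_{m(s+2r)} → π₀V(Y,N')(F)_{m(s+2r)} commutes. -/

import Mathlib

open scoped ENNReal NNReal

/-- `d` is an extended pseudo-metric on `X`: it takes values in `[0,∞]`,
vanishes on the diagonal, is symmetric, and satisfies the triangle inequality. -/
structure IsEPMetric {X : Type*} (d : X → X → ℝ≥0∞) : Prop where
  refl : ∀ x, d x x = 0
  symm : ∀ x y, d x y = d y x
  triangle : ∀ x y z, d x z ≤ d x y + d y z

/-- The set of costs `Σ_{j=1}^{n} d_{i_j}(x_{j-1}, x_j)` of finite chains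
`x = x₀, x₁, …, x_n = y` together with choices of indices `i₁, …, i_n`. -/
def chainCosts {X I : Type*} (d : I → X → X → ℝ≥0∞) (x y : X) : Set ℝ≥0∞ :=
  { c | ∃ (n : ℕ) (p : Fin (n + 1) → X) (ix : Fin n → I),
      p 0 = x ∧ p (Fin.last n) = y ∧
      c = ∑ j : Fin n, d (ix j) (p j.castSucc) (p j.succ) }

/-- The wedge ep-metric `D` of a family of ep-metrics: the infimum of the
costs of all finite chains from `x` to `y`. -/
noncomputable def wedgeDist {X I : Type*} (d : I → X → X → ℝ≥0∞) (x y : X) : ℝ≥0∞ :=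
  sInf (chainCosts d x y)

open Classical in
/-- The ep-metric `D_z` on `X` determined by a centre `z`, its set of
neighbours `N z` and weights `w z -`:  `D_z(u,u) = 0`;
`D_z(z,y) = D_z(y,z) = w z y` for `y ∈ N z`;
`D_z(y,y') = w z y + w z y'` for distinct `y, y' ∈ N z`; and
`D_z(u,v) = ∞` for all other pairs `u ≠ v`. -/
noncomputable def starDist {X : Type*} (N : X → Set X) (w : X → X → ℝ≥0∞)
    (z : X) : X → X → ℝ≥0∞ := fun u v =>
  if u = v then 0
  else if u = z ∧ v ∈ N z then w z v
  else if v = z ∧ u ∈ N z then w z u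
  else if u ∈ N z ∧ v ∈ N z then w z u + w z v
  else ⊤

/-- The UMAP ep-metric `D = ∨_{z ∈ X} D_z`, the wedge of the ep-metrics
`D_z` over all centres `z ∈ X`. -/
noncomputable def umapDist {X : Type*} (N : X → Set X) (w : X → X → ℝ≥0∞) :
    X → X → ℝ≥0∞ :=
  wedgeDist (fun z : X => starDist N w z)

/-- `E` is a global connected component of the ep-metric space `(Z,d)`:
it is an equivalence class of the relation `d(u,v) < ∞`. -/
def IsGlobalComponent {Z : Type*} (d : Z → Z → ℝ≥0∞) (E : Set Z) : Prop :=
  ∃ u : Z, E = {v | d u v < ⊤}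

/-- The set of UMAP clusters `π₀V(Z,N)(E)_s` is the set of equivalence classes
of `E` for this relation: the equivalence relation generated by the pairs
`(u,v)` of elements of `E` with `D_z(u,v) ≤ s` for some centre `z`. -/
def umapClusterRel {Z : Type*} (N : Z → Set Z) (w : Z → Z → ℝ≥0∞)
    (E : Set Z) (s : ℝ≥0∞) : Z → Z → Prop :=
  Relation.EqvGen (fun u v => u ∈ E ∧ v ∈ E ∧ ∃ z : Z, starDist N w z u v ≤ s)

/-!
The wedge `D` is the largest function with `D x x = 0` satisfying the triangle inequality below
every `D_z`; this universal property gives the triangle inequality and symmetry of `D`, and, applied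
to the function that is `0` on pairs related by the equivalence generated by `D_z < t` and `t`
elsewhere, shows that `D a b < t` forces `a ~_t b`, through a chain staying in the component of `a`.
Part (i) holds because `i` does not increase the star distances. For (ii) and (iii), `θ` sends
`y ∈ F` to a point of `E` within `D'`-distance `r` of `y` (fixing `E`): a single step
`D'_z(a, b) ≤ s` gives `D'(θ a, θ b) < s + 2r`, hence `D(θ a, θ b) < m(s + 2r)`, and
`D'(u, θ u) < r ≤ m(s + 2r)`.
-/

namespace Relation.EqvGen

variable {α β : Type*} {r : α → α → Prop}

theorem map_of_equivalence {s : β → β → Prop} (hs : Equivalence s) (f : α → β)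
    (hf : ∀ a b, r a b → s (f a) (f b)) {a b : α} (h : EqvGen r a b) : s (f a) (f b) :=
  (hs.comap f).eqvGen_iff.1 (h.mono hf)

theorem restrict {S : Set α} (hS : ∀ a b, r a b → (a ∈ S ↔ b ∈ S)) {a b : α}
    (h : EqvGen r a b) (ha : a ∈ S) : EqvGen (fun u v => u ∈ S ∧ v ∈ S ∧ r u v) a b := by
  suffices (a ∈ S ↔ b ∈ S) ∧ (a ∈ S → EqvGen (fun u v => u ∈ S ∧ v ∈ S ∧ r u v) a b) from
    this.2 ha
  clear ha
  induction h with
  | rel a b hab => exact ⟨hS a b hab, fun ha => .rel _ _ ⟨ha, (hS a b hab).1 ha, hab⟩⟩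
  | refl a => exact ⟨Iff.rfl, fun _ => .refl _⟩
  | symm a b _ ih => exact ⟨ih.1.symm, fun hb => .symm _ _ (ih.2 (ih.1.2 hb))⟩
  | trans a b c _ _ ih₁ ih₂ =>
    exact ⟨ih₁.1.trans ih₂.1, fun ha => .trans _ _ _ (ih₁.2 ha) (ih₂.2 (ih₁.1.1 ha))⟩

end Relation.EqvGen

section Wedge

variable {X I : Type*} {d : I → X → X → ℝ≥0∞}

theorem wedgeDist_self (x : X) : wedgeDist d x x = 0 :=
  nonpos_iff_eq_zero.1 <| sInf_le ⟨0, fun _ => x, Fin.elim0, rfl, rfl, by simp⟩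

theorem wedgeDist_le (k : I) (x y : X) : wedgeDist d x y ≤ d k x y :=
  sInf_le ⟨1, ![x, y], fun _ => k, rfl, rfl, by simp⟩

theorem wedgeDist_le_add_wedgeDist (k : I) (x y z : X) :
    wedgeDist d x z ≤ d k x y + wedgeDist d y z := by
  rw [wedgeDist, wedgeDist, ENNReal.add_sInf]
  refine le_iInf₂ fun c ⟨n, p, ix, hp₀, hpn, hc⟩ => sInf_le ?_
  refine ⟨n + 1, Fin.cons x p, Fin.cons k ix, rfl, by simpa using hpn, ?_⟩
  simp [Fin.sum_univ_succ, hp₀, hc]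

theorem le_wedgeDist {ρ : X → X → ℝ≥0∞} (hρ_self : ∀ x, ρ x x = 0)
    (hρ_triangle : ∀ x y z, ρ x z ≤ ρ x y + ρ y z) (hρd : ∀ k x y, ρ x y ≤ d k x y)
    (x y : X) : ρ x y ≤ wedgeDist d x y := by
  refine le_sInf ?_
  rintro _ ⟨n, p, ix, rfl, rfl, rfl⟩
  induction n with
  | zero => simp [Fin.last, hρ_self]
  | succ n ih =>
    calc ρ (p 0) (p (Fin.last (n + 1)))
        ≤ ρ (p 0) (p 1) + ρ (Fin.tail p 0) (Fin.tail p (Fin.last n)) := hρ_triangle _ _ _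
      _ ≤ d (ix 0) (p 0) (p 1) +
            ∑ j : Fin n, d (Fin.tail ix j) (Fin.tail p j.castSucc) (Fin.tail p j.succ) :=
          add_le_add (hρd _ _ _) (ih _ _)
      _ = _ := by simp [Fin.sum_univ_succ, Fin.tail]

theorem wedgeDist_triangle (x y z : X) :
    wedgeDist d x z ≤ wedgeDist d x y + wedgeDist d y z :=
  -- `x ↦ wedgeDist d x z` is `1`-Lipschitz for the wedge, by the universal property
  tsub_le_iff_right.1 <| le_wedgeDist (ρ := fun x y => wedgeDist d x z - wedgeDist d y z)
    (fun _ => tsub_self _) (fun _ _ _ => tsub_le_tsub_add_tsub)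
    (fun k x y => tsub_le_iff_right.2 (wedgeDist_le_add_wedgeDist k x y z)) x y

theorem wedgeDist_comm (hd : ∀ k x y, d k x y = d k y x) (x y : X) :
    wedgeDist d x y = wedgeDist d y x := by
  have swap : ∀ x y : X, wedgeDist d y x ≤ wedgeDist d x y :=
    le_wedgeDist (ρ := fun x y => wedgeDist d y x) wedgeDist_self
      (fun x y z => (wedgeDist_triangle z y x).trans_eq (add_comm _ _))
      (fun k x y => (wedgeDist_le k y x).trans_eq (hd k y x))
  exact le_antisymm (swap y x) (swap x y)

theorem isEPMetric_wedgeDist (hd : ∀ k x y, d k x y = d k y x) : IsEPMetric (wedgeDist d) :=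
  ⟨wedgeDist_self, wedgeDist_comm hd, wedgeDist_triangle⟩

theorem eqvGen_of_wedgeDist_lt {t : ℝ≥0∞} {x y : X} (h : wedgeDist d x y < t) :
    Relation.EqvGen (fun u v => ∃ k, d k u v < t) x y := by
  classical
  set R : X → X → Prop := fun u v => ∃ k, d k u v < t
  by_contra hxy
  have hρ : (if Relation.EqvGen R x y then 0 else t) ≤ wedgeDist d x y := by
    refine le_wedgeDist (ρ := fun u v => if Relation.EqvGen R u v then 0 else t)
      (fun u => if_pos (.refl u)) (fun u v w => ?_) (fun k u v => ?_) x y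
    · have hρ_le : ∀ u v, (if Relation.EqvGen R u v then 0 else t) ≤ t :=
        fun u v => (ite_le_sup _ _ _).trans (sup_le zero_le le_rfl)
      by_cases huv : Relation.EqvGen R u v
      · by_cases hvw : Relation.EqvGen R v w
        · simp [Relation.EqvGen.trans _ _ _ huv hvw]
        · simpa [hvw] using (hρ_le u w).trans le_add_self
      · simpa [huv] using (hρ_le u w).trans le_self_add
    · by_cases huv : d k u v < t
      · simp [Relation.EqvGen.rel u v (show R u v from ⟨k, huv⟩)]
      · exact (ite_le_sup _ _ _).trans (sup_le zero_le (not_lt.1 huv))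
  rw [if_neg hxy] at hρ
  exact hρ.not_gt h

end Wedge

theorem IsEPMetric.lt_add_two_mul {Z : Type*} {d : Z → Z → ℝ≥0∞} (hd : IsEPMetric d)
    {a a' b b' : Z} {r s : ℝ≥0∞} (hs : s ≠ ⊤) (ha : d a a' < r) (hab : d a b ≤ s)
    (hb : d b b' < r) : d a' b' < s + 2 * r :=
  calc d a' b' ≤ d a' a + d a b + d b b' :=
        (hd.triangle _ b _).trans (add_le_add_left (hd.triangle _ a _) _)
    _ < r + s + r := by
      rw [hd.symm]
      exact ENNReal.add_lt_add
        (ENNReal.add_lt_add_of_lt_of_le (ne_top_of_le_ne_top hs hab) ha hab) hb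
    _ = s + 2 * r := by ring

theorem IsGlobalComponent.nonempty {Z : Type*} {d : Z → Z → ℝ≥0∞} {E : Set Z}
    (hd : IsEPMetric d) (hE : IsGlobalComponent d E) : E.Nonempty := by
  obtain ⟨u, rfl⟩ := hE
  exact ⟨u, by simp [hd.refl]⟩

theorem IsGlobalComponent.mem_iff_of_lt_top {Z : Type*} {d : Z → Z → ℝ≥0∞} {E : Set Z}
    (hd : IsEPMetric d) (hE : IsGlobalComponent d E) {u v : Z} (h : d u v < ⊤) :
    u ∈ E ↔ v ∈ E := by
  obtain ⟨z, rfl⟩ := hE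
  exact ⟨fun hu => (hd.triangle z u v).trans_lt (ENNReal.add_lt_top.2 ⟨hu, h⟩),
    fun hv => (hd.triangle z v u).trans_lt (ENNReal.add_lt_top.2 ⟨hv, hd.symm u v ▸ h⟩)⟩

section UMAP

variable {X : Type*} {N : X → Set X} {w : X → X → ℝ≥0∞}

theorem starDist_comm (z u v : X) : starDist N w z u v = starDist N w z v u := by
  unfold starDist
  split_ifs <;> simp_all [add_comm]

theorem isEPMetric_umapDist : IsEPMetric (umapDist N w) :=
  isEPMetric_wedgeDist starDist_comm

theorem umapClusterRel_of_umapDist_lt {E : Set X} (hE : IsGlobalComponent (umapDist N w) E)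
    {t : ℝ≥0∞} {a b : X} (ha : a ∈ E) (h : umapDist N w a b < t) :
    umapClusterRel N w E t a b := by
  have hE_closed : ∀ u v, (∃ z, starDist N w z u v < t) → (u ∈ E ↔ v ∈ E) :=
    fun u v ⟨z, hz⟩ => hE.mem_iff_of_lt_top isEPMetric_umapDist
      ((wedgeDist_le z u v).trans_lt (hz.trans_le le_top))
  exact ((eqvGen_of_wedgeDist_lt h).restrict hE_closed ha).mono
    fun u v ⟨hu, hv, z, hz⟩ => ⟨hu, hv, z, hz.le⟩

end UMAP

theorem starDist_map_le {X Y : Type*} {i : X → Y} (hi : Function.Injective i)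
    {NX : X → Set X} {wX : X → X → ℝ≥0∞} {NY : Y → Set Y} {wY : Y → Y → ℝ≥0∞}
    (hsub : ∀ x z, z ∈ NX x → i z ∈ NY (i x))
    (hcomp : ∀ x z, z ∈ NX x → wY (i x) (i z) ≤ wX x z) (z u v : X) :
    starDist NY wY (i z) (i u) (i v) ≤ starDist NX wX z u v := by
  unfold starDist
  split_ifs <;> simp_all [hi.eq_iff, add_le_add]

theorem exists_retraction {X Y : Type*} [Nonempty X] {i : X → Y} (hi : Function.Injective i)
    {E : Set X} {F : Set Y} (near : Y → X → Prop) (hnear : ∀ y ∈ F, ∃ x ∈ E, near y x)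
    (hnear_self : ∀ x ∈ E, near (i x) x) :
    ∃ θ : Y → X, (∀ y ∈ F, θ y ∈ E ∧ near y (θ y)) ∧ ∀ x ∈ E, θ (i x) = x := by
  classical
  refine ⟨fun y => if h : ∃ x ∈ E, i x = y then h.choose
    else if h' : ∃ x ∈ E, near y x then h'.choose else Classical.arbitrary X, ?_, ?_⟩
  · intro y hy
    by_cases h : ∃ x ∈ E, i x = y
    · obtain ⟨hmem, hiy⟩ := h.choose_spec
      have hnear_choose := hnear_self _ hmem
      rw [hiy] at hnear_choose
      simpa only [dif_pos h] using ⟨hmem, hnear_choose⟩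
    · simpa only [dif_neg h, dif_pos (hnear y hy)] using (hnear y hy).choose_spec
  · intro x hx
    have h : ∃ x' ∈ E, i x' = i x := ⟨x, hx, rfl⟩
    simpa only [dif_pos h] using hi h.choose_spec.2

theorem umap_cluster_stability_general {X Y : Type*}
    (i : X → Y) (hi : Function.Injective i)
    (NX : X → Set X) (wX : X → X → ℝ≥0∞)
    (NY : Y → Set Y) (wY : Y → Y → ℝ≥0∞)
    (hsub : ∀ x z, z ∈ NX x → i z ∈ NY (i x))
    (hcomp : ∀ x z, z ∈ NX x → wY (i x) (i z) ≤ wX x z)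
    (E : Set X) (hE : IsGlobalComponent (umapDist NX wX) E)
    (F : Set Y) (hF : IsGlobalComponent (umapDist NY wY) F)
    (hEF : i '' E ⊆ F)
    (m : ℝ≥0) (hm1 : 1 ≤ m)
    (hm : ∀ u ∈ E, ∀ v ∈ E,
      umapDist NX wX u v ≤ (m : ℝ≥0∞) * umapDist NY wY (i u) (i v))
    (r : ℝ≥0) (hr : 0 < r)
    (hnear : ∀ y ∈ F, ∃ x ∈ E, umapDist NY wY y (i x) < (r : ℝ≥0∞)) :
    ∃ θ : Y → X, (∀ y ∈ F, θ y ∈ E) ∧ (∀ x ∈ E, θ (i x) = x) ∧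
      ∀ s : ℝ≥0,
        -- (i) `i` maps clusters of `E` at level `s` to clusters of `F`
        (∀ u ∈ E, ∀ v ∈ E, umapClusterRel NX wX E (s : ℝ≥0∞) u v →
          umapClusterRel NY wY F (s : ℝ≥0∞) (i u) (i v)) ∧
        -- (ii) `θ` maps clusters of `F` at level `s` to clusters of `E` at
        -- level `m·(s+2r)`
        (∀ u ∈ F, ∀ v ∈ F, umapClusterRel NY wY F (s : ℝ≥0∞) u v →
          umapClusterRel NX wX E ((m : ℝ≥0∞) * ((s : ℝ≥0∞) + 2 * (r : ℝ≥0∞)))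
            (θ u) (θ v)) ∧
        -- (iii) the interleaving diagram commutes: `u` and `i (θ u)` lie in
        -- the same cluster of `F` at level `m·(s+2r)`
        (∀ u ∈ F, umapClusterRel NY wY F ((m : ℝ≥0∞) * ((s : ℝ≥0∞) + 2 * (r : ℝ≥0∞)))
          u (i (θ u))) := by
  obtain ⟨y₀, hy₀⟩ := hF.nonempty isEPMetric_umapDist
  have : Nonempty X := ⟨(hnear y₀ hy₀).choose⟩
  obtain ⟨θ, hθF, hθi⟩ := exists_retraction hi (fun y x => umapDist NY wY y (i x) < r) hnear
    fun x _ => by simpa [umapDist, wedgeDist_self] using hr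
  have hm0 : (m : ℝ≥0∞) ≠ 0 := by exact_mod_cast (zero_lt_one.trans_le hm1).ne'
  refine ⟨θ, fun y hy => (hθF y hy).1, hθi, fun s => ⟨?_, ?_, ?_⟩⟩
  · rintro u - v - huv
    exact huv.map_of_equivalence (Relation.EqvGen.is_equivalence _) i
      fun a b ⟨ha, hb, z, hz⟩ => .rel _ _ ⟨hEF ⟨a, ha, rfl⟩, hEF ⟨b, hb, rfl⟩, i z,
        (starDist_map_le hi hsub hcomp z a b).trans hz⟩
  · rintro u - v - huv
    refine huv.map_of_equivalence (Relation.EqvGen.is_equivalence _) θ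
      fun a b ⟨ha, hb, z, hz⟩ => umapClusterRel_of_umapDist_lt hE (hθF a ha).1 ?_
    calc umapDist NX wX (θ a) (θ b) ≤ m * umapDist NY wY (i (θ a)) (i (θ b)) :=
          hm _ (hθF a ha).1 _ (hθF b hb).1
      _ < m * (s + 2 * r) := ENNReal.mul_lt_mul_right hm0 ENNReal.coe_ne_top <|
          isEPMetric_umapDist.lt_add_two_mul ENNReal.coe_ne_top (hθF a ha).2
            ((wedgeDist_le z a b).trans hz) (hθF b hb).2
  · intro u hu
    refine umapClusterRel_of_umapDist_lt hF hu ((hθF u hu).2.trans_le ?_)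
    calc (r : ℝ≥0∞) ≤ s + 2 * r := le_add_left (le_mul_of_one_le_left zero_le one_le_two)
      _ ≤ m * (s + 2 * r) := le_mul_of_one_le_left zero_le (by exact_mod_cast hm1)

/-- Theorem 10, stability for UMAP clusters: given an inclusion `i : X ⊆ Y` of
finite sets with compatible neighbourhood systems, UMAP ep-metrics `D`, `D'`,
global connected components `E ⊆ X`, `F ⊆ Y` with `i(E) ⊆ F`, a compression
factor `m ≥ 1` on `E`, and `r > 0` such that every point of `F` is within
`D'`-distance `< r` of a point of `i(E)`, there is a retraction `θ : F → E`
inducing an interleaving of the systems of clusters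
`π₀V(X,N)(E)` and `π₀V(Y,N')(F)`:
(i) `u ~_{E,s} v` implies `i u ~_{F,s} i v`;
(ii) `u ~_{F,s} v` implies `θ u ~_{E,m(s+2r)} θ v`; and
(iii) `u ~_{F,m(s+2r)} i (θ u)` for every `u ∈ F`. -/
theorem umap_cluster_stability {X Y : Type*} [Finite X] [Finite Y]
    (i : X → Y) (hi : Function.Injective i)
    (NX : X → Set X) (wX : X → X → ℝ≥0∞) (hNX : ∀ x, x ∉ NX x)
    (hwX : ∀ x z, z ∈ NX x → 0 < wX x z ∧ wX x z < ⊤)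
    (NY : Y → Set Y) (wY : Y → Y → ℝ≥0∞) (hNY : ∀ y, y ∉ NY y)
    (hwY : ∀ y z, z ∈ NY y → 0 < wY y z ∧ wY y z < ⊤)
    (hsub : ∀ x z, z ∈ NX x → i z ∈ NY (i x))
    (hcomp : ∀ x z, z ∈ NX x → wY (i x) (i z) ≤ wX x z)
    (E : Set X) (hE : IsGlobalComponent (umapDist NX wX) E)
    (F : Set Y) (hF : IsGlobalComponent (umapDist NY wY) F)
    (hEF : i '' E ⊆ F)
    (m : ℝ≥0) (hm1 : 1 ≤ m)
    (hm : ∀ u ∈ E, ∀ v ∈ E,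
      umapDist NX wX u v ≤ (m : ℝ≥0∞) * umapDist NY wY (i u) (i v))
    (r : ℝ≥0) (hr : 0 < r)
    (hnear : ∀ y ∈ F, ∃ x ∈ E, umapDist NY wY y (i x) < (r : ℝ≥0∞)) :
    ∃ θ : Y → X, (∀ y ∈ F, θ y ∈ E) ∧ (∀ x ∈ E, θ (i x) = x) ∧
      ∀ s : ℝ≥0,
        -- (i) `i` maps clusters of `E` at level `s` to clusters of `F`
        (∀ u ∈ E, ∀ v ∈ E, umapClusterRel NX wX E (s : ℝ≥0∞) u v →
          umapClusterRel NY wY F (s : ℝ≥0∞) (i u) (i v)) ∧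
        -- (ii) `θ` maps clusters of `F` at level `s` to clusters of `E` at
        -- level `m·(s+2r)`
        (∀ u ∈ F, ∀ v ∈ F, umapClusterRel NY wY F (s : ℝ≥0∞) u v →
          umapClusterRel NX wX E ((m : ℝ≥0∞) * ((s : ℝ≥0∞) + 2 * (r : ℝ≥0∞)))
            (θ u) (θ v)) ∧
        -- (iii) the interleaving diagram commutes: `u` and `i (θ u)` lie in
        -- the same cluster of `F` at level `m·(s+2r)`
        (∀ u ∈ F, umapClusterRel NY wY F ((m : ℝ≥0∞) * ((s : ℝ≥0∞) + 2 * (r : ℝ≥0∞)))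
          u (i (θ u))) :=
  umap_cluster_stability_general i hi NX wX NY wY hsub hcomp E hE F hF hEF m hm1 hm r hr hnear
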